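/- If n is odd and 4 ≤ m+1 ≤ n, then the operator A_{2-n} A_{4-n} is invertible on the space P_m of homogeneous degree-m polynomials on ℝ^n: its eigenvalue (2m-2k)(2m-2k+2)(2k+2-n)(2k+4-n) on r^{2k}H_{m-2k} is nonzero for every 0 ≤ k ≤ ⌊m/2⌋. -/

import Mathlib

open MvPolynomial

noncomputable section

/-- The polynomial Laplacian `Δp = ∑ ∂²p/∂xᵢ²` on `ℝ^n`. -/
def pLap (n : ℕ) (p : MvPolynomial (Fin n) ℝ) : MvPolynomial (Fin n) ℝ :=
  ∑ i : Fin n, pderiv i (pderiv i p)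

/-- The polynomial `r² = |x|² = ∑ xᵢ²`. -/
def r2 (n : ℕ) : MvPolynomial (Fin n) ℝ := ∑ i : Fin n, X i ^ 2

/-- The radial derivative `r∂_r p = ∑ xᵢ ∂p/∂xᵢ`. -/
def prdr (n : ℕ) (p : MvPolynomial (Fin n) ℝ) : MvPolynomial (Fin n) ℝ :=
  ∑ i : Fin n, X i * pderiv i p

/-- The operator `A_α = r²Δ + 2α r∂_r + α(α+n-2)`. -/
def Apol (n : ℕ) (α : ℝ) (p : MvPolynomial (Fin n) ℝ) : MvPolynomial (Fin n) ℝ :=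
  r2 n * pLap n p + C (2 * α) * prdr n p + C (α * (α + (n : ℝ) - 2)) * p

/-- The operator `B_α = 2 r∂_r + (2α+n-2)`. -/
def Bpol (n : ℕ) (α : ℝ) (p : MvPolynomial (Fin n) ℝ) : MvPolynomial (Fin n) ℝ :=
  C 2 * prdr n p + C (2 * α + (n : ℝ) - 2) * p


variable {n : ℕ}

lemma pLap_def (p : MvPolynomial (Fin n) ℝ) : pLap n p = ∑ i : Fin n, pderiv i (pderiv i p) := rfl
lemma prdr_def (p : MvPolynomial (Fin n) ℝ) : prdr n p = ∑ i : Fin n, X i * pderiv i p := rfl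

lemma deg_eq (d : Fin n →₀ ℕ) : d.degree = ∑ i : Fin n, d i :=
  Finset.sum_subset (Finset.subset_univ _)
    (by intros i _ h; simpa [Finsupp.notMem_support_iff] using h)

lemma X_mul_pderiv_monomial (i : Fin n) (d : Fin n →₀ ℕ) (a : ℝ) :
    X i * pderiv i (monomial d a) = monomial d (a * d i) := by
  rw [pderiv_monomial]
  rcases Nat.eq_zero_or_pos (d i) with h | h
  · simp [h]
  · rw [X, monomial_mul, one_mul, add_comm, tsub_add_cancel_of_le]
    exact Finsupp.single_le_iff.mpr h

lemma prdr_monomial (d : Fin n →₀ ℕ) (a : ℝ) :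
    prdr n (monomial d a) = C ((d.degree : ℝ)) * monomial d a := by
  rw [prdr]
  simp only [X_mul_pderiv_monomial]
  rw [← map_sum (monomial d), C_mul_monomial, ← Finset.mul_sum, deg_eq]
  push_cast; ring_nf

lemma prdr_sum {ι : Type*} (s : Finset ι) (f : ι → MvPolynomial (Fin n) ℝ) :
    prdr n (∑ d ∈ s, f d) = ∑ d ∈ s, prdr n (f d) := by
  simp only [prdr, map_sum, Finset.mul_sum]
  exact Finset.sum_comm

lemma pLap_sum {ι : Type*} (s : Finset ι) (f : ι → MvPolynomial (Fin n) ℝ) :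
    pLap n (∑ d ∈ s, f d) = ∑ d ∈ s, pLap n (f d) := by
  simp only [pLap, map_sum]
  exact Finset.sum_comm

lemma pLap_add (p q : MvPolynomial (Fin n) ℝ) : pLap n (p+q) = pLap n p + pLap n q := by
  simp [pLap, Finset.sum_add_distrib]

lemma pLap_C_mul (a : ℝ) (p : MvPolynomial (Fin n) ℝ) : pLap n (C a * p) = C a * pLap n p := by
  simp [pLap, pderiv_C_mul, Finset.mul_sum]

lemma degree_of_mem_support {p : MvPolynomial (Fin n) ℝ} {m : ℕ} (hp : p.IsHomogeneous m)
    {d : Fin n →₀ ℕ} (hd : d ∈ p.support) : d.degree = m := by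
  by_contra h; exact (mem_support_iff.mp hd) (hp.coeff_eq_zero h)

lemma euler {p : MvPolynomial (Fin n) ℝ} {m : ℕ} (hp : p.IsHomogeneous m) :
    prdr n p = C (m : ℝ) * p := by
  conv_lhs => rw [← p.support_sum_monomial_coeff]
  rw [prdr_sum]
  conv_rhs => rw [← p.support_sum_monomial_coeff, Finset.mul_sum]
  exact Finset.sum_congr rfl fun d hd => by rw [prdr_monomial, degree_of_mem_support hp hd]

lemma pderiv_isHomogeneous {p : MvPolynomial (Fin n) ℝ} {m : ℕ} (hp : p.IsHomogeneous m)
    (i : Fin n) : (pderiv i p).IsHomogeneous (m-1) := by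
  conv_lhs => rw [← p.support_sum_monomial_coeff]
  rw [map_sum]
  apply MvPolynomial.IsHomogeneous.sum
  intro d hd
  have hdm : d.degree = m := degree_of_mem_support hp hd
  rw [pderiv_monomial]
  rcases Nat.eq_zero_or_pos (d i) with h | h
  · simp [h]; exact isHomogeneous_zero _ _ _
  · apply isHomogeneous_monomial
    have h1 : Finsupp.single i 1 ≤ d := Finsupp.single_le_iff.mpr h
    have h2 : (d - Finsupp.single i 1).degree + (Finsupp.single i 1).degree = d.degree := by
      rw [deg_eq, deg_eq, deg_eq, ← Finset.sum_add_distrib]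
      exact Finset.sum_congr rfl fun j _ => by
        rw [← Finsupp.add_apply, tsub_add_cancel_of_le h1]
    have h3 : (Finsupp.single i (1:ℕ)).degree = 1 := by
      exact Finsupp.degree_single i 1
    rw [h3, hdm] at h2
    omega

lemma pderiv_of_homog_zero {p : MvPolynomial (Fin n) ℝ} (hp : p.IsHomogeneous 0) (i : Fin n) :
    pderiv i p = 0 := by
  conv_lhs => rw [← p.support_sum_monomial_coeff]
  rw [map_sum]
  apply Finset.sum_eq_zero
  intro d hd
  have hdm : d.degree = 0 := degree_of_mem_support hp hd
  have : d i = 0 := by have := Finsupp.le_degree i d; omega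
  rw [pderiv_monomial, this]
  simp

lemma pLap_isHomogeneous {p : MvPolynomial (Fin n) ℝ} {m : ℕ} (hp : p.IsHomogeneous m) :
    (pLap n p).IsHomogeneous (m-2) := by
  rw [pLap]
  apply MvPolynomial.IsHomogeneous.sum
  intro i _
  have := pderiv_isHomogeneous (pderiv_isHomogeneous hp i) i
  rwa [Nat.sub_sub] at this

lemma pLap_of_homog_le_one {p : MvPolynomial (Fin n) ℝ} {m : ℕ} (hp : p.IsHomogeneous m)
    (hm : m ≤ 1) : pLap n p = 0 := by
  rw [pLap]
  apply Finset.sum_eq_zero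
  intro i _
  have h1 : (pderiv i p).IsHomogeneous 0 := by
    have := pderiv_isHomogeneous hp i
    rwa [Nat.le_one_iff_eq_zero_or_eq_one.mp hm |>.elim (fun h => by omega : m = 0 → m - 1 = 0) (fun h => by omega)] at this
  exact pderiv_of_homog_zero h1 i

lemma pderiv_r2 (i : Fin n) : pderiv i (r2 n) = C 2 * X i := by
  rw [r2, map_sum]
  rw [Finset.sum_eq_single i]
  · rw [pow_two, pderiv_mul, pderiv_X_self]
    rw [map_ofNat C 2]; ring
  · intro j _ hj
    rw [pow_two, pderiv_mul, pderiv_X_of_ne hj]; ring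
  · simp

lemma pLap_r2_mul (q : MvPolynomial (Fin n) ℝ) :
    pLap n (r2 n * q) = r2 n * pLap n q + C 4 * prdr n q + C (2 * (n:ℝ)) * q := by
  have step : ∀ i : Fin n, pderiv i (pderiv i (r2 n * q)) =
      C 2 * q + C 4 * (X i * pderiv i q) + r2 n * pderiv i (pderiv i q) := by
    intro i
    rw [pderiv_mul, pderiv_r2, map_add, pderiv_mul, pderiv_mul, pderiv_mul, pderiv_r2,
      pderiv_X_self, pderiv_C]
    rw [map_ofNat C 4, map_ofNat C 2]
    ring
  rw [pLap_def]
  simp only [step]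
  rw [Finset.sum_add_distrib, Finset.sum_add_distrib, ← Finset.mul_sum, ← Finset.mul_sum,
    ← Finset.mul_sum, ← pLap_def, ← prdr_def, Finset.sum_const, Finset.card_univ,
    Fintype.card_fin, nsmul_eq_mul, ← C_eq_coe_nat, ← mul_assoc, ← C_mul]
  ring

lemma pLap_zero : pLap n (0 : MvPolynomial (Fin n) ℝ) = 0 := by simp [pLap_def]

lemma key : ∀ m : ℕ, ∀ c : ℝ,
    (∀ k : ℕ, 2*k ≤ m → 2*(k:ℝ)*(2*(m:ℝ)-2*(k:ℝ)+(n:ℝ)-2) + c ≠ 0) →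
    ∀ p : MvPolynomial (Fin n) ℝ, p.IsHomogeneous m →
      r2 n * pLap n p + C c * p = 0 → p = 0 := by
  intro m
  induction m using Nat.strong_induction_on with
  | _ m IH =>
    intro c hc p hp heq
    have hc0 : c ≠ 0 := by
      have := hc 0 (by omega)
      simpa using this
    rcases le_or_gt m 1 with hm | hm
    · rw [pLap_of_homog_le_one hp hm, mul_zero, zero_add] at heq
      rcases mul_eq_zero.mp heq with h | h
      · exact absurd (by simpa using h) hc0
      · exact h
    · obtain ⟨m', rfl⟩ : ∃ m', m = m' + 2 := ⟨m - 2, by omega⟩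
      have hLp : (pLap n p).IsHomogeneous m' := by
        simpa using pLap_isHomogeneous hp
      -- apply pLap to the equation
      have h0 := congrArg (pLap n) heq
      rw [pLap_add, pLap_r2_mul, pLap_C_mul, euler hLp, pLap_zero] at h0
      have h1 : r2 n * pLap n (pLap n p) + C (c + 4*(m':ℝ) + 2*(n:ℝ)) * pLap n p = 0 := by
        simp only [C_add, C_mul] at h0 ⊢
        linear_combination h0
      have h2 : pLap n p = 0 := by
        apply IH m' (by omega) (c + 4*(m':ℝ) + 2*(n:ℝ)) _ _ hLp h1
        intro j hj
        have h3 := hc (j+1) (by omega)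
        have e : 2*(((j+1):ℕ):ℝ)*(2*((m'+2:ℕ):ℝ)-2*(((j+1):ℕ):ℝ)+(n:ℝ)-2) + c
            = 2*(j:ℝ)*(2*(m':ℝ)-2*(j:ℝ)+(n:ℝ)-2) + (c + 4*(m':ℝ) + 2*(n:ℝ)) := by
          push_cast; ring
        rwa [e] at h3
      rw [h2, mul_zero, zero_add] at heq
      rcases mul_eq_zero.mp heq with h | h
      · exact absurd (by simpa using h) hc0
      · exact h

lemma isHomogeneous_r2 : (r2 n).IsHomogeneous 2 := by
  rw [r2]
  exact MvPolynomial.IsHomogeneous.sum _ _ _ (fun i _ => by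
    simpa using isHomogeneous_X_pow (R := ℝ) i 2)

lemma Apol_eq {p : MvPolynomial (Fin n) ℝ} {m : ℕ} (hp : p.IsHomogeneous m) (α : ℝ) :
    Apol n α p = r2 n * pLap n p + C (α*(2*(m:ℝ)+α+(n:ℝ)-2)) * p := by
  rw [Apol, euler hp]
  simp only [C_add, C_mul, C_sub]
  push_cast
  ring

/-- If `n` is odd and `m ≤ n - 1`, the operator `A_{2-n} A_{4-n}` is invertible
on the space of homogeneous degree-`m` polynomials on `ℝ^n`; more precisely, its eigenvalue
`(2m-2k)(2m-2k+2)(2k+2-n)(2k+4-n)` on `r^{2k}H_{m-2k}` is nonzero for every `0 ≤ k ≤ ⌊m/2⌋`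
when `4 ≤ m+1 ≤ n`. -/
theorem stmt8 (n m : ℕ) (hodd : Odd n) (hm4 : 4 ≤ m + 1) (hmn : m + 1 ≤ n) :
    (∀ p : MvPolynomial (Fin n) ℝ, p.IsHomogeneous m →
        Apol n (2 - (n : ℝ)) (Apol n (4 - (n : ℝ)) p) = 0 → p = 0) ∧
    (∀ k : ℕ, 2 * k ≤ m →
      (2 * (m : ℝ) - 2 * (k : ℝ)) * (2 * (m : ℝ) - 2 * (k : ℝ) + 2) *
        (2 * (k : ℝ) + 2 - (n : ℝ)) * (2 * (k : ℝ) + 4 - (n : ℝ)) ≠ 0) := by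
  have hne : ∀ j : ℕ, (n : ℝ) ≠ 2 * (j : ℝ) := by
    intro j h
    have : n = 2 * j := by exact_mod_cast h
    exact (Nat.not_even_iff_odd.mpr hodd) ⟨j, by omega⟩
  have hmk : ∀ k : ℕ, 2 * k ≤ m → (2 * (m:ℝ) - 2 * (k:ℝ)) ≠ 0 := by
    intro k hk
    have h1 : (k:ℝ) < (m:ℝ) := by exact_mod_cast (by omega : k < m)
    intro h; linarith
  have h22 : ∀ k : ℕ, (2 * (k:ℝ) + 2 - (n:ℝ)) ≠ 0 := by
    intro k h
    exact hne (k+1) (by push_cast; linarith)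
  have h24 : ∀ k : ℕ, (2 * (k:ℝ) + 4 - (n:ℝ)) ≠ 0 := by
    intro k h
    exact hne (k+2) (by push_cast; linarith)
  constructor
  · intro p hp heq
    have hq : (Apol n (4 - (n:ℝ)) p) = r2 n * pLap n p + C ((4-(n:ℝ))*(2*(m:ℝ)+2)) * p := by
      rw [Apol_eq hp]; ring_nf
    have hqh : (Apol n (4 - (n:ℝ)) p).IsHomogeneous m := by
      rw [hq]
      apply MvPolynomial.IsHomogeneous.add
      · have := isHomogeneous_r2.mul (pLap_isHomogeneous hp)
        rwa [show 2 + (m-2) = m by omega] at this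
      · exact hp.C_mul _
    rw [Apol_eq hqh] at heq
    have hq0 : Apol n (4 - (n:ℝ)) p = 0 := by
      apply key m ((2-(n:ℝ))*(2*(m:ℝ)+(2-(n:ℝ))+(n:ℝ)-2)) _ _ hqh heq
      intro k hk
      have e : 2*(k:ℝ)*(2*(m:ℝ)-2*(k:ℝ)+(n:ℝ)-2) + (2-(n:ℝ))*(2*(m:ℝ)+(2-(n:ℝ))+(n:ℝ)-2)
          = (2*(m:ℝ)-2*(k:ℝ))*(2*(k:ℝ)+2-(n:ℝ)) := by ring
      rw [e]
      exact mul_ne_zero (hmk k hk) (h22 k)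
    rw [hq] at hq0
    apply key m ((4-(n:ℝ))*(2*(m:ℝ)+2)) _ _ hp hq0
    intro k hk
    have e : 2*(k:ℝ)*(2*(m:ℝ)-2*(k:ℝ)+(n:ℝ)-2) + (4-(n:ℝ))*(2*(m:ℝ)+2)
        = (2*(m:ℝ)-2*(k:ℝ)+2)*(2*(k:ℝ)+4-(n:ℝ)) := by ring
    rw [e]
    apply mul_ne_zero _ (h24 k)
    have h1 : (k:ℝ) ≤ (m:ℝ) := by exact_mod_cast (by omega : k ≤ m)
    intro h; linarith [hmk k hk]
  · intro k hk
    exact mul_ne_zero (mul_ne_zero (mul_ne_zero (hmk k hk) (by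
      have h1 : (k:ℝ) < (m:ℝ) := by exact_mod_cast (by omega : k < m)
      intro h; linarith)) (h22 k)) (h24 k)
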